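/- arXiv:0709.3917 — 4 statements merged into one kernel-verified Lean document; each statement's English description precedes it below -/
import Mathlib

section
/- Let K = ℂ and let V ⊆ K[x,y,z]_2 be the 3-dimensional space spanned by x^2 + 2jyz, y^2 + 2jxz, z^2 + 2jxy with j ∈ ℂ, j^3 ∉ {0, 1, -1/8}. Then the quotient K[x,y,z]/(V) is Artinian with Hilbert series 1 + 3x + 3x^2 + x^3, i.e., V generates a complete intersection ideal. -/
open MvPolynomial

noncomputable def piece {K : Type*} [Field K] {n : ℕ} (I : Ideal (MvPolynomial (Fin n) K))
    (i : ℕ) : Submodule K (MvPolynomial (Fin n) K ⧸ I) :=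
  (MvPolynomial.homogeneousSubmodule (Fin n) K i).map (Ideal.Quotient.mkₐ K I).toLinearMap

/-- Variables: `X 0 = x`, `X 1 = y`, `X 2 = z`; the Hesse net
`(x² + 2jyz, y² + 2jxz, z² + 2jxy)`. -/
noncomputable def hesseIdeal (j : ℂ) : Ideal (MvPolynomial (Fin 3) ℂ) :=
  Ideal.span ({X 0 ^ 2 + C (2 * j) * (X 1 * X 2), X 1 ^ 2 + C (2 * j) * (X 0 * X 2),
    X 2 ^ 2 + C (2 * j) * (X 0 * X 1)} : Set (MvPolynomial (Fin 3) ℂ))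

/-!
In `A = ℂ[x, y, z] ⧸ I` write `x_a` for the image of the `a`-th variable, indices taken mod 3.
The generators of `I` say `x_a² = t • x_{a+1} x_{a+2}` with `t = -2j`. Multiplying by `x_{a+1}`
gives `x_a² x_{a+1} = t • x_{a+1}² x_{a+2}`; going once round the cycle yields
`(1 - t³) • x_a² x_{a+1} = 0`, and `t³ ≠ 1` is exactly `j³ ≠ -1/8`. The same works for
`x_a² x_{a+2}`, so every `x_a² x_b` with `a ≠ b` vanishes. Hence `A₂` is spanned by the three
products `x_{k+1} x_{k+2}`, `A₃` by `xyz`, and `A₄ = A₁ A₃ = 0`; in particular `A` is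
finite-dimensional, hence Artinian.

For the lower bounds, the functional `xyz* - 2j (x³* + y³* + z³*)` on cubic coefficients kills `I`,
and on `A` it pairs `x_i` with `x_{k+1} x_{k+2}` by the identity matrix.
-/

section Pieces

variable {K : Type*} [Field K] {n : ℕ} (I : Ideal (MvPolynomial (Fin n) K))

theorem piece_eq_span_pow (d : ℕ) :
    piece I d = Submodule.span K (Set.range fun i => Ideal.Quotient.mk I (X i)) ^ d := by
  rw [piece, ← homogeneousSubmodule_one_pow, Submodule.map_pow,
    homogeneousSubmodule_one_eq_span_X, Submodule.map_span, ← Set.range_comp]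
  rfl

theorem iSup_piece : ⨆ d, piece I d = ⊤ := by
  let := decomposition (σ := Fin n) (R := K)
  simp_rw [piece, ← Submodule.map_iSup,
    (DirectSum.Decomposition.isInternal (homogeneousSubmodule (Fin n) K)).submodule_iSup_eq_top,
    Submodule.map_top, LinearMap.range_eq_top]
  exact Ideal.Quotient.mkₐ_surjective K I

theorem finite_quotient_of_piece_eq_bot {N : ℕ} (h : ∀ d, N ≤ d → piece I d = ⊥) :
    Module.Finite K (MvPolynomial (Fin n) K ⧸ I) := by
  have htop : ⨆ d ∈ Finset.range N, piece I d = ⊤ := by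
    refine eq_top_iff.mpr ((iSup_piece I).ge.trans (iSup_le fun d => ?_))
    by_cases hd : d < N
    · exact le_biSup (piece I) (Finset.mem_range.mpr hd)
    · rw [h d (not_lt.mp hd)]
      exact bot_le
  refine ⟨htop ▸ Submodule.fg_biSup _ _ fun d _ => ?_⟩
  exact (homogeneousSubmodule_fg (Fin n) K d).map _

end Pieces

section CyclicRelations

variable {K A : Type*} [Field K] [CommRing A] [Algebra K A] {t : K}

theorem eq_zero_of_forall_eq_algebraMap_mul (ht : t ^ 3 ≠ 1) {P : Fin 3 → A} {s : Fin 3}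
    (hP : ∀ a, P a = algebraMap K A t * P (a + s)) (a : Fin 3) : P a = 0 := by
  have hcycle : ∀ a s : Fin 3, a + s + s + s = a := by decide
  have h : P a = algebraMap K A t ^ 3 * P a := by
    conv_lhs => rw [hP, hP, hP, hcycle]
    ring
  have h' : algebraMap K A (1 - t ^ 3) * P a = 0 := by
    rw [map_sub, map_one, map_pow, sub_mul, one_mul, ← h, sub_self]
  exact ((sub_ne_zero.mpr ht.symm).isUnit.map (algebraMap K A)).mul_right_eq_zero.mp h'

omit [Algebra K A] in
theorem mul_mul_cyclic_eq {x : Fin 3 → A} (a : Fin 3) :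
    x a * (x (a + 1) * x (a + 2)) = x 0 * (x 1 * x 2) := by
  fin_cases a <;> simp <;> ring

variable {x : Fin 3 → A} (hx : ∀ a, x a ^ 2 = algebraMap K A t * (x (a + 1) * x (a + 2)))
include hx

theorem sq_mul_add_one_eq_zero (ht : t ^ 3 ≠ 1) (a : Fin 3) : x a ^ 2 * x (a + 1) = 0 := by
  refine eq_zero_of_forall_eq_algebraMap_mul (P := fun a => x a ^ 2 * x (a + 1)) (s := 1) ht
    (fun a => ?_) a
  rw [hx, add_assoc, show (1 + 1 : Fin 3) = 2 from rfl]
  ring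

theorem sq_mul_add_two_eq_zero (ht : t ^ 3 ≠ 1) (a : Fin 3) : x a ^ 2 * x (a + 2) = 0 := by
  refine eq_zero_of_forall_eq_algebraMap_mul (P := fun a => x a ^ 2 * x (a + 2)) (s := 2) ht
    (fun a => ?_) a
  rw [hx, add_assoc, show (2 + 2 : Fin 3) = 1 from rfl]
  ring

theorem mul_mem_span_pairs (a b : Fin 3) :
    x a * x b ∈ Submodule.span K (Set.range fun k => x (k + 1) * x (k + 2)) := by
  obtain ⟨s, rfl⟩ : ∃ s, b = a + s := ⟨b - a, by abel⟩
  fin_cases s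
  · rw [Fin.zero_eta, add_zero, ← sq, hx, ← Algebra.smul_def]
    exact Submodule.smul_mem _ _ (Submodule.subset_span ⟨a, rfl⟩)
  · refine Submodule.subset_span ⟨a + 2, ?_⟩
    simp [add_assoc]
  · refine Submodule.subset_span ⟨a + 1, ?_⟩
    simp [add_assoc, mul_comm]

theorem mul_pair_mem_span_triple (ht : t ^ 3 ≠ 1) (a b : Fin 3) :
    x b * (x (a + 1) * x (a + 2)) ∈ Submodule.span K {x 0 * (x 1 * x 2)} := by
  obtain ⟨s, rfl⟩ : ∃ s, b = a + s := ⟨b - a, by abel⟩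
  fin_cases s
  · rw [Fin.zero_eta, add_zero, mul_mul_cyclic_eq]
    exact Submodule.mem_span_singleton_self _
  · convert Submodule.zero_mem _ using 1
    rw [← sq_mul_add_one_eq_zero hx ht (a + 1)]
    simp [add_assoc]
    ring
  · convert Submodule.zero_mem _ using 1
    rw [← sq_mul_add_two_eq_zero hx ht (a + 2)]
    simp [add_assoc]
    ring

theorem mul_triple_eq_zero (ht : t ^ 3 ≠ 1) (a : Fin 3) : x a * (x 0 * (x 1 * x 2)) = 0 := by
  rw [← mul_mul_cyclic_eq a, ← mul_assoc, ← mul_assoc, ← sq, sq_mul_add_one_eq_zero hx ht,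
    zero_mul]

theorem span_range_pow_two :
    Submodule.span K (Set.range x) ^ 2 =
      Submodule.span K (Set.range fun k => x (k + 1) * x (k + 2)) := by
  apply le_antisymm
  · rw [pow_two, Submodule.span_mul_span, Submodule.span_le, Set.mul_subset_iff]
    rintro _ ⟨a, rfl⟩ _ ⟨b, rfl⟩
    exact mul_mem_span_pairs hx a b
  · rw [Submodule.span_le]
    rintro _ ⟨k, rfl⟩
    rw [pow_two]
    exact Submodule.mul_mem_mul (Submodule.subset_span ⟨_, rfl⟩) (Submodule.subset_span ⟨_, rfl⟩)

theorem span_range_pow_three (ht : t ^ 3 ≠ 1) :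
    Submodule.span K (Set.range x) ^ 3 = Submodule.span K {x 0 * (x 1 * x 2)} := by
  rw [pow_succ', span_range_pow_two hx]
  apply le_antisymm
  · rw [Submodule.span_mul_span, Submodule.span_le, Set.mul_subset_iff]
    rintro _ ⟨b, rfl⟩ _ ⟨a, rfl⟩
    exact mul_pair_mem_span_triple hx ht a b
  · rw [Submodule.span_singleton_le_iff_mem]
    exact Submodule.mul_mem_mul (Submodule.subset_span ⟨0, rfl⟩) (Submodule.subset_span ⟨0, rfl⟩)

theorem span_range_pow_eq_bot (ht : t ^ 3 ≠ 1) {n : ℕ} (hn : 4 ≤ n) :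
    Submodule.span K (Set.range x) ^ n = ⊥ := by
  have h4 : Submodule.span K (Set.range x) ^ 4 = ⊥ := by
    rw [pow_succ', span_range_pow_three hx ht, Submodule.span_mul_span, Submodule.span_eq_bot]
    rintro _ ⟨_, ⟨a, rfl⟩, _, rfl, rfl⟩
    exact mul_triple_eq_zero hx ht a
  obtain ⟨m, rfl⟩ := Nat.exists_eq_add_of_le' hn
  rw [pow_add, h4, Submodule.mul_bot]

end CyclicRelations

section Pairing

variable {K A : Type*} [Field K] [CommRing A] [Algebra K A] {x : Fin 3 → A}
  (ψ : A →ₗ[K] K) (hψ : ∀ i k, ψ (x i * (x (k + 1) * x (k + 2))) = if i = k then 1 else 0)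
include hψ

theorem linearIndependent_of_pairing : LinearIndependent K x := by
  refine .of_pairwise_dual_eq_zero_one _
    (fun i => ψ ∘ₗ LinearMap.mulRight K (x (i + 1) * x (i + 2))) (fun i k hik => ?_) (fun i => ?_)
  · simp only [LinearMap.comp_apply, LinearMap.mulRight_apply, hψ, if_neg hik.symm]
  · simp only [LinearMap.comp_apply, LinearMap.mulRight_apply, hψ, if_pos]

theorem linearIndependent_pairs_of_pairing :
    LinearIndependent K fun k => x (k + 1) * x (k + 2) := by
  refine .of_pairwise_dual_eq_zero_one _ (fun i => ψ ∘ₗ LinearMap.mulLeft K (x i))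
    (fun i k hik => ?_) (fun i => ?_)
  · simp only [LinearMap.comp_apply, LinearMap.mulLeft_apply, hψ, if_neg hik]
  · simp only [LinearMap.comp_apply, LinearMap.mulLeft_apply, hψ, if_pos]

theorem mul_mul_ne_zero_of_pairing : x 0 * (x 1 * x 2) ≠ 0 := by
  intro h
  simpa [h] using hψ 0 0

end Pairing

section Hesse

noncomputable def expTriple (a b c : ℕ) : Fin 3 →₀ ℕ :=
  Finsupp.single 0 a + Finsupp.single 1 b + Finsupp.single 2 c

@[simp] theorem expTriple_apply_zero (a b c : ℕ) : expTriple a b c 0 = a := by simp [expTriple]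
@[simp] theorem expTriple_apply_one (a b c : ℕ) : expTriple a b c 1 = b := by simp [expTriple]
@[simp] theorem expTriple_apply_two (a b c : ℕ) : expTriple a b c 2 = c := by simp [expTriple]

theorem eq_expTriple_iff {s : Fin 3 →₀ ℕ} {a b c : ℕ} :
    s = expTriple a b c ↔ s 0 = a ∧ s 1 = b ∧ s 2 = c := by
  refine ⟨by rintro rfl; simp, fun ⟨h0, h1, h2⟩ => ?_⟩
  ext i; fin_cases i <;> simpa

theorem expTriple_le_iff {a b c a' b' c' : ℕ} :
    expTriple a b c ≤ expTriple a' b' c' ↔ a ≤ a' ∧ b ≤ b' ∧ c ≤ c' := by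
  simp [Finsupp.le_def, Fin.forall_fin_succ]

theorem expTriple_tsub (a b c a' b' c' : ℕ) :
    expTriple a b c - expTriple a' b' c' = expTriple (a - a') (b - b') (c - c') := by
  ext i; fin_cases i <;> simp

theorem monomial_expTriple (a b c : ℕ) (r : ℂ) :
    monomial (expTriple a b c) r = C r * X 0 ^ a * X 1 ^ b * X 2 ^ c := by
  simp only [expTriple, X_pow_eq_monomial, C_mul_monomial, monomial_mul, add_assoc]
  simp

noncomputable def hesseDual (j : ℂ) : MvPolynomial (Fin 3) ℂ →ₗ[ℂ] ℂ :=
  lcoeff ℂ (expTriple 1 1 1) -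
    (2 * j) • (lcoeff ℂ (expTriple 3 0 0) + lcoeff ℂ (expTriple 0 3 0) +
      lcoeff ℂ (expTriple 0 0 3))

theorem hesseDual_mul_generator (j : ℂ) (p : MvPolynomial (Fin 3) ℂ) :
    ∀ g ∈ ({X 0 ^ 2 + C (2 * j) * (X 1 * X 2), X 1 ^ 2 + C (2 * j) * (X 0 * X 2),
      X 2 ^ 2 + C (2 * j) * (X 0 * X 1)} : Set (MvPolynomial (Fin 3) ℂ)),
      hesseDual j (p * g) = 0 := by
  have h0 : X 0 ^ 2 + C (2 * j) * (X 1 * X 2) =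
      monomial (expTriple 2 0 0) 1 + monomial (expTriple 0 1 1) (2 * j) := by
    simp [monomial_expTriple]; ring
  have h1 : X 1 ^ 2 + C (2 * j) * (X 0 * X 2) =
      monomial (expTriple 0 2 0) 1 + monomial (expTriple 1 0 1) (2 * j) := by
    simp [monomial_expTriple]; ring
  have h2 : X 2 ^ 2 + C (2 * j) * (X 0 * X 1) =
      monomial (expTriple 0 0 2) 1 + monomial (expTriple 1 1 0) (2 * j) := by
    simp [monomial_expTriple]; ring
  rintro g (rfl | rfl | rfl) <;> [rw [h0]; rw [h1]; rw [h2]] <;>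
  · simp only [hesseDual, LinearMap.sub_apply, LinearMap.smul_apply, LinearMap.add_apply,
      lcoeff_apply, mul_add, coeff_add, coeff_mul_monomial', expTriple_le_iff, expTriple_tsub]
    norm_num
    ring

theorem hesseIdeal_le_ker_hesseDual (j : ℂ) :
    (hesseIdeal j).restrictScalars ℂ ≤ LinearMap.ker (hesseDual j) := by
  intro p hp
  suffices h : ∀ r, hesseDual j (r * p) = 0 by simpa using h 1
  induction hp using Submodule.span_induction with
  | mem g hg => exact fun r => hesseDual_mul_generator j r g hg
  | zero => simp
  | add p q _ _ hp hq => simp [mul_add, hp, hq]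
  | smul a p _ hp => exact fun r => by rw [smul_eq_mul, ← mul_assoc, hp]

noncomputable def hesseDualQuot (j : ℂ) : (MvPolynomial (Fin 3) ℂ ⧸ hesseIdeal j) →ₗ[ℂ] ℂ :=
  ((hesseIdeal j).restrictScalars ℂ).liftQ (hesseDual j) (hesseIdeal_le_ker_hesseDual j) ∘ₗ
    (Submodule.Quotient.restrictScalarsEquiv ℂ (hesseIdeal j)).symm.toLinearMap

theorem hesseDualQuot_mk (j : ℂ) (p : MvPolynomial (Fin 3) ℂ) :
    hesseDualQuot j (Ideal.Quotient.mk _ p) = hesseDual j p := rfl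

theorem hesseDual_X_mul_X_mul_X (j : ℂ) (i k : Fin 3) :
    hesseDual j (X i * (X (k + 1) * X (k + 2))) = if i = k then 1 else 0 := by
  simp only [hesseDual, X, monomial_mul, LinearMap.sub_apply, LinearMap.smul_apply,
    LinearMap.add_apply, lcoeff_apply, coeff_monomial, eq_expTriple_iff]
  fin_cases i <;> fin_cases k <;> simp

theorem hesseDualQuot_pairing (j : ℂ) (i k : Fin 3) :
    hesseDualQuot j (Ideal.Quotient.mk _ (X i) *
      (Ideal.Quotient.mk _ (X (k + 1)) * Ideal.Quotient.mk _ (X (k + 2)))) =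
      if i = k then 1 else 0 := by
  rw [← map_mul, ← map_mul, hesseDualQuot_mk, hesseDual_X_mul_X_mul_X]

theorem mk_X_sq_hesseIdeal (j : ℂ) (a : Fin 3) :
    Ideal.Quotient.mk (hesseIdeal j) (X a) ^ 2 = algebraMap ℂ _ (-(2 * j)) *
      (Ideal.Quotient.mk (hesseIdeal j) (X (a + 1)) *
        Ideal.Quotient.mk (hesseIdeal j) (X (a + 2))) := by
  have hg : X a ^ 2 + C (2 * j) * (X (a + 1) * X (a + 2)) ∈ hesseIdeal j := by
    apply Ideal.subset_span
    fin_cases a <;> simp [mul_comm]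
  rw [← Ideal.Quotient.eq_zero_iff_mem] at hg
  simp only [map_add, map_pow, map_mul, map_neg, ← algebraMap_eq,
    Ideal.Quotient.mk_algebraMap] at hg ⊢
  linear_combination hg

end Hesse

theorem stmt10_general (j : ℂ) (hj2 : j ^ 3 ≠ -1/8) :
    IsArtinianRing (MvPolynomial (Fin 3) ℂ ⧸ hesseIdeal j) ∧
    Module.finrank ℂ (piece (hesseIdeal j) 0) = 1 ∧
    Module.finrank ℂ (piece (hesseIdeal j) 1) = 3 ∧
    Module.finrank ℂ (piece (hesseIdeal j) 2) = 3 ∧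
    Module.finrank ℂ (piece (hesseIdeal j) 3) = 1 ∧
    ∀ i, 4 ≤ i → piece (hesseIdeal j) i = ⊥ := by
  have hx := mk_X_sq_hesseIdeal j
  have ht : (-(2 * j)) ^ 3 ≠ 1 := fun h => hj2 (by linear_combination -h / 8)
  have hψ := hesseDualQuot_pairing j
  have hpiece := piece_eq_span_pow (hesseIdeal j)
  have hbot : ∀ d, 4 ≤ d → piece (hesseIdeal j) d = ⊥ := fun d hd =>
    (hpiece d).trans (span_range_pow_eq_bot hx ht hd)
  have := finite_quotient_of_piece_eq_bot _ hbot
  have hω := mul_mul_ne_zero_of_pairing _ hψ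
  have := nontrivial_of_ne _ _ hω
  refine ⟨IsArtinianRing.of_finite ℂ _, ?_, ?_, ?_, ?_, hbot⟩
  · rw [hpiece, Submodule.pow_zero, Submodule.one_eq_span, finrank_span_singleton one_ne_zero]
  · rw [hpiece, Submodule.pow_one, finrank_span_eq_card (linearIndependent_of_pairing _ hψ)]
    simp
  · rw [hpiece, span_range_pow_two hx,
      finrank_span_eq_card (linearIndependent_pairs_of_pairing _ hψ)]
    simp
  · rw [hpiece, span_range_pow_three hx ht, finrank_span_singleton hω]

theorem stmt10 (j : ℂ) (hj0 : j ^ 3 ≠ 0) (hj1 : j ^ 3 ≠ 1) (hj2 : j ^ 3 ≠ -1/8) :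
    IsArtinianRing (MvPolynomial (Fin 3) ℂ ⧸ hesseIdeal j) ∧
    Module.finrank ℂ (piece (hesseIdeal j) 0) = 1 ∧
    Module.finrank ℂ (piece (hesseIdeal j) 1) = 3 ∧
    Module.finrank ℂ (piece (hesseIdeal j) 2) = 3 ∧
    Module.finrank ℂ (piece (hesseIdeal j) 3) = 1 ∧
    ∀ i, 4 ≤ i → piece (hesseIdeal j) i = ⊥ :=
  stmt10_general j hj2
end

section
/- Let K = ℂ, j ∈ ℂ with j^3 ∉ {0, 1, -1/8}, and V the net spanned by x^2 + 2jyz, y^2 + 2jxz, z^2 + 2jxy. Then there is no nonzero linear form ℓ = ax + by + cz ∈ ℂ[x,y,z]_1 with ℓ^2 ∈ V. -/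
open MvPolynomial

/-- Variables: `X 0 = x`, `X 1 = y`, `X 2 = z`; the Hesse net. -/
theorem stmt11 (j : ℂ) (hj0 : j ^ 3 ≠ 0) (hj1 : j ^ 3 ≠ 1) (hj2 : j ^ 3 ≠ -1/8)
    (a b c : ℂ)
    (h : (C a * X 0 + C b * X 1 + C c * X 2) ^ 2 ∈
      Submodule.span ℂ ({X 0 ^ 2 + C (2 * j) * (X 1 * X 2), X 1 ^ 2 + C (2 * j) * (X 0 * X 2),
      X 2 ^ 2 + C (2 * j) * (X 0 * X 1)} : Set (MvPolynomial (Fin 3) ℂ))) :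
    a = 0 ∧ b = 0 ∧ c = 0 := by
  rw [Submodule.mem_span_insert] at h
  obtain ⟨s, p, hp, hP⟩ := h
  rw [Submodule.mem_span_insert] at hp
  obtain ⟨t, q, hq, rfl⟩ := hp
  rw [Submodule.mem_span_singleton] at hq
  obtain ⟨u, rfl⟩ := hq
  have ev : ∀ v : Fin 3 → ℂ,
      (a * v 0 + b * v 1 + c * v 2) ^ 2 =
      s * ((v 0) ^ 2 + 2 * j * (v 1 * v 2)) + t * ((v 1) ^ 2 + 2 * j * (v 0 * v 2))
        + u * ((v 2) ^ 2 + 2 * j * (v 0 * v 1)) := by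
    intro v
    have h2 := congrArg (eval v) hP
    simp [smul_eq_C_mul] at h2
    linear_combination h2
  have e1 := ev ![1, 0, 0]
  have e2 := ev ![0, 1, 0]
  have e3 := ev ![0, 0, 1]
  have e4 := ev ![1, 1, 0]
  have e5 := ev ![1, 0, 1]
  have e6 := ev ![0, 1, 1]
  simp [Matrix.cons_val_zero, Matrix.cons_val_one] at e1 e2 e3 e4 e5 e6
  have hab : a * b = j * c ^ 2 := by linear_combination (1/2 : ℂ) * e4 - (1/2 : ℂ) * e1 - (1/2 : ℂ) * e2 - j * e3
  have hac : a * c = j * b ^ 2 := by linear_combination (1/2 : ℂ) * e5 - (1/2 : ℂ) * e1 - (1/2 : ℂ) * e3 - j * e2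
  have hbc : b * c = j * a ^ 2 := by linear_combination (1/2 : ℂ) * e6 - (1/2 : ℂ) * e2 - (1/2 : ℂ) * e3 - j * e1
  have hj : j ≠ 0 := fun h => hj0 (by simp [h])
  have key : ∀ x : ℂ, j * x ^ 2 = 0 → x = 0 := by
    intro x hx
    have := (mul_eq_zero.mp hx).resolve_left hj
    exact pow_eq_zero_iff two_ne_zero |>.mp this
  have h0 : (a * b * c) ^ 2 * (1 - j ^ 3) = 0 := by
    linear_combination (a * c * b * c) * hab + (j * c ^ 2 * b * c) * hac + (j ^ 2 * b ^ 2 * c ^ 2) * hbc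
  have habc : a * b * c = 0 := by
    have h1 : (1 : ℂ) - j ^ 3 ≠ 0 := sub_ne_zero.mpr fun h => hj1 h.symm
    have := (mul_eq_zero.mp h0).resolve_right h1
    exact pow_eq_zero_iff two_ne_zero |>.mp this
  rcases mul_eq_zero.mp habc with h' | hc
  · rcases mul_eq_zero.mp h' with ha | hb
    · have hc : c = 0 := key c (by rw [ha, zero_mul] at hab; exact hab.symm)
      have hb : b = 0 := key b (by rw [ha, zero_mul] at hac; exact hac.symm)
      exact ⟨ha, hb, hc⟩
    · have hc : c = 0 := key c (by rw [hb, mul_zero] at hab; exact hab.symm)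
      have ha : a = 0 := key a (by rw [hb, zero_mul] at hbc; exact hbc.symm)
      exact ⟨ha, hb, hc⟩
  · have hb : b = 0 := key b (by rw [hc, mul_zero] at hac; exact hac.symm)
    have ha : a = 0 := key a (by rw [hc, mul_zero] at hbc; exact hbc.symm)
    exact ⟨ha, hb, hc⟩
end

section
/- Let K be a field and R = K[t,z,w,y]/I with I = (y^2, yz, z^2 - wy, t^2, tw, w^2 - tz, wz). Then an element ℓ = at + bz + cw + dy ∈ R_1 satisfies ℓ^2 = 0 in R if and only if ℓ is a scalar multiple of y or of t. -/
open MvPolynomial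

/-- Variables: `X 0 = t`, `X 1 = z`, `X 2 = w`, `X 3 = y`;
the ideal `(y², yz, z² - wy, t², tw, w² - tz, wz)` of Example 2.5. -/
noncomputable def I14 (K : Type*) [Field K] : Ideal (MvPolynomial (Fin 4) K) :=
  Ideal.span ({X 3 ^ 2, X 3 * X 1, X 1 ^ 2 - X 2 * X 3, X 0 ^ 2, X 0 * X 2,
    X 2 ^ 2 - X 0 * X 1, X 2 * X 1} : Set (MvPolynomial (Fin 4) K))


lemma XX {K : Type*} [Field K] (i j : Fin 4) :
    (X i * X j : MvPolynomial (Fin 4) K) = monomial (Finsupp.single i 1 + Finsupp.single j 1) 1 := by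
  rw [X, X, monomial_mul, one_mul]

lemma key {K : Type*} [Field K] {x : MvPolynomial (Fin 4) K} (hx : x ∈ I14 K) :
    coeff (Finsupp.single 0 1 + Finsupp.single 1 1) x + coeff (Finsupp.single 2 2) x = 0 ∧
    coeff (Finsupp.single 2 1 + Finsupp.single 3 1) x + coeff (Finsupp.single 1 2) x = 0 ∧
    coeff (Finsupp.single 0 1 + Finsupp.single 3 1) x = 0 := by
  have main : ∀ p : MvPolynomial (Fin 4) K,
      coeff (Finsupp.single 0 1 + Finsupp.single 1 1) (p*x) + coeff (Finsupp.single 2 2) (p*x) = 0 ∧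
      coeff (Finsupp.single 2 1 + Finsupp.single 3 1) (p*x) + coeff (Finsupp.single 1 2) (p*x) = 0 ∧
      coeff (Finsupp.single 0 1 + Finsupp.single 3 1) (p*x) = 0 := by
    refine Submodule.span_induction ?_ ?_ ?_ ?_ hx
    · intro g hg p
      simp only [Set.mem_insert_iff, Set.mem_singleton_iff] at hg
      rcases hg with rfl | rfl | rfl | rfl | rfl | rfl | rfl <;>
        · simp only [X_pow_eq_monomial, XX, mul_sub, coeff_sub, coeff_mul_monomial']
          refine ⟨?_, ?_, ?_⟩ <;>
            · simp +decide [Finsupp.le_def, Finsupp.single_apply, Fin.forall_fin_succ]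
    · intro p; simp
    · intro x y hx hy ihx ihy p
      obtain ⟨a1, a2, a3⟩ := ihx p
      obtain ⟨b1, b2, b3⟩ := ihy p
      simp only [mul_add, coeff_add]
      refine ⟨by linear_combination a1 + b1, by linear_combination a2 + b2,
        by linear_combination a3 + b3⟩
    · intro a x hx ih p
      rw [smul_eq_mul, ← mul_assoc]
      exact ih (p * a)
  simpa using main 1


lemma mem0 {K : Type*} [Field K] : (X 0 ^ 2 : MvPolynomial (Fin 4) K) ∈ I14 K :=
  Ideal.subset_span (by simp)

lemma mem3 {K : Type*} [Field K] : (X 3 ^ 2 : MvPolynomial (Fin 4) K) ∈ I14 K :=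
  Ideal.subset_span (by simp)

lemma smk {K : Type*} [Field K] (s : K) (q : MvPolynomial (Fin 4) K) :
    Ideal.Quotient.mk (I14 K) (C s * q) = s • Ideal.Quotient.mk (I14 K) q := by
  rw [← smul_eq_C_mul, ← Ideal.Quotient.mkₐ_eq_mk K, map_smul]

theorem stmt14 {K : Type*} [Field K] (h2 : (2 : K) ≠ 0) (a b c d : K) :
    (Ideal.Quotient.mk (I14 K) (C a * X 0 + C b * X 1 + C c * X 2 + C d * X 3)) ^ 2 = 0 ↔
      ((∃ s : K, Ideal.Quotient.mk (I14 K) (C a * X 0 + C b * X 1 + C c * X 2 + C d * X 3) =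
          s • Ideal.Quotient.mk (I14 K) (X 3)) ∨
       (∃ s : K, Ideal.Quotient.mk (I14 K) (C a * X 0 + C b * X 1 + C c * X 2 + C d * X 3) =
          s • Ideal.Quotient.mk (I14 K) (X 0))) := by
  constructor
  · intro h
    have hmem : (C a * X 0 + C b * X 1 + C c * X 2 + C d * X 3 : MvPolynomial (Fin 4) K) ^ 2
        ∈ I14 K := by
      rw [← map_pow] at h
      exact Ideal.Quotient.eq_zero_iff_mem.mp h
    obtain ⟨h1, h2', h3⟩ := key hmem
    simp only [sq, add_mul, mul_add, C_mul_X_eq_monomial, monomial_mul, coeff_add,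
      coeff_monomial] at h1 h2' h3
    simp +decide [Finsupp.ext_iff, Finsupp.single_apply, Fin.forall_fin_succ] at h1 h2' h3
    have had : a * d = 0 := by
      have h4 : (2:K) * (a*d) = 0 := by linear_combination h3
      exact (mul_eq_zero.mp h4).resolve_left h2
    rcases mul_eq_zero.mp had with ha | hd
    · have hc : c = 0 := mul_self_eq_zero.mp (by linear_combination h1 - 2*b*ha)
      have hb : b = 0 := mul_self_eq_zero.mp (by linear_combination h2' - 2*d*hc)
      refine Or.inl ⟨d, ?_⟩
      rw [ha, hb, hc, ← smk]
      simp only [map_zero, zero_mul, zero_add]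
    · have hb : b = 0 := mul_self_eq_zero.mp (by linear_combination h2' - 2*c*hd)
      have hc : c = 0 := mul_self_eq_zero.mp (by linear_combination h1 - 2*a*hb)
      refine Or.inr ⟨a, ?_⟩
      rw [hb, hc, hd, ← smk]
      simp only [map_zero, zero_mul, zero_add, add_zero]
  · rintro (⟨s, hs⟩ | ⟨s, hs⟩) <;> rw [hs, smul_pow, ← map_pow]
    · rw [Ideal.Quotient.eq_zero_iff_mem.mpr mem3, smul_zero]
    · rw [Ideal.Quotient.eq_zero_iff_mem.mpr mem0, smul_zero]
end

section
/- Let K be a field of characteristic not 2 and let R be a standard graded K-algebra with dim R_1 = 2, dim R_2 = 1, R_i = 0 for i ≥ 3, defined by quadrics (Hilbert series 1 + 2x + x^2), over K algebraically closed. Then there exist linearly independent t, w ∈ R_1 with t^2 = 0 and w^2 = 0. -/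
open MvPolynomial

/-!
Let `x, y` be the images of `X 0, X 1` and `g` a generator of `R₂`. Squaring `R₁ → R₂` is the
binary quadratic form `(a, b) ↦ a²α + 2abβ + b²γ`, where `x² = αg`, `xy = βg`, `y² = γg`. If its
discriminant `β² - αγ` is nonzero, it has two non-proportional zeros since `K` is algebraically
closed of characteristic `≠ 2`. If the discriminant vanishes, every quadric of `I` vanishes at
`(α, β)` and `(β, γ)`; since `I` is generated by quadrics and contains all cubes, both points are
`0`, so the form is identically zero and `x, y` themselves work.
-/

lemma exists_independent_zeros_of_binary_quadratic {K : Type*} [Field K] [IsAlgClosed K]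
    (h2 : (2 : K) ≠ 0) {α β γ : K} (hdisc : β ^ 2 = α * γ → α = 0 ∧ β = 0 ∧ γ = 0) :
    ∃ a b c d : K, a * d - b * c ≠ 0 ∧
      a ^ 2 * α + 2 * a * b * β + b ^ 2 * γ = 0 ∧ c ^ 2 * α + 2 * c * d * β + d ^ 2 * γ = 0 := by
  by_cases hΔ : β ^ 2 = α * γ
  · obtain ⟨rfl, rfl, rfl⟩ := hdisc hΔ
    exact ⟨1, 0, 0, 1, by norm_num, by ring, by ring⟩
  by_cases hα : α = 0
  · subst hα
    have hβ : β ≠ 0 := by rintro rfl; simp at hΔ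
    exact ⟨1, 0, γ, -2 * β, by simpa using mul_ne_zero h2 hβ, by ring, by ring⟩
  · obtain ⟨s, hs⟩ := IsAlgClosed.exists_pow_nat_eq (β ^ 2 - α * γ) two_pos
    have hs0 : s ≠ 0 := by rintro rfl; exact hΔ (by linear_combination -hs)
    refine ⟨-β + s, α, -β - s, α, ?_, by linear_combination α * hs, by linear_combination α * hs⟩
    have hdet : (-β + s) * α - α * (-β - s) = 2 * s * α := by ring
    rw [hdet]
    exact mul_ne_zero (mul_ne_zero h2 hs0) hα

lemma LinearIndependent.pair_smul_add_smul {K V : Type*} [CommRing K] [NoZeroDivisors K]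
    [AddCommGroup V] [Module K V] {t w : V} (h : LinearIndependent K ![t, w]) {a b c d : K}
    (hdet : a * d - b * c ≠ 0) : LinearIndependent K ![a • t + b • w, c • t + d • w] := by
  rw [LinearIndependent.pair_iff] at h ⊢
  intro s r hsr
  obtain ⟨e₁, e₂⟩ := h (s * a + r * c) (s * b + r * d) (by rw [← hsr]; module)
  have hs : s * (a * d - b * c) = 0 := by linear_combination d * e₁ - c * e₂
  have hr : r * (a * d - b * c) = 0 := by linear_combination a * e₂ - b * e₁
  exact ⟨(mul_eq_zero.mp hs).resolve_right hdet, (mul_eq_zero.mp hr).resolve_right hdet⟩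

lemma sq_smul_add_smul {K A : Type*} [CommRing K] [CommRing A] [Algebra K A] {t w g : A}
    {α β γ : K} (ht : t ^ 2 = α • g) (htw : t * w = β • g) (hw : w ^ 2 = γ • g) (a b : K) :
    (a • t + b • w) ^ 2 = (a ^ 2 * α + 2 * a * b * β + b ^ 2 * γ) • g := by
  calc (a • t + b • w) ^ 2 = a ^ 2 • t ^ 2 + (2 * a * b) • (t * w) + b ^ 2 • w ^ 2 := by
        simp only [Algebra.smul_def, map_mul, map_pow, map_ofNat]; ring
    _ = _ := by rw [ht, htw, hw]; module

namespace MvPolynomial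

variable {K : Type*} [Field K]

lemma monomial_one_fin_two (v : Fin 2 →₀ ℕ) :
    monomial v (1 : K) = X 0 ^ v 0 * X 1 ^ v 1 := by
  rw [monomial_eq, C_1, one_mul, Finsupp.prod_fintype _ _ (fun _ => pow_zero _), Fin.prod_univ_two]

lemma IsHomogeneous.exists_eq_sum_X_pow_mul_X_pow {p : MvPolynomial (Fin 2) K} {n : ℕ}
    (hp : p.IsHomogeneous n) :
    ∃ c : Fin (n + 1) → K, p = ∑ i, c i • (X 0 ^ (i : ℕ) * X 1 ^ (n - i)) := by
  suffices p ∈ Submodule.span K (Set.range fun i : Fin (n + 1) => X 0 ^ (i : ℕ) * X 1 ^ (n - i)) by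
    obtain ⟨c, hc⟩ := (Submodule.mem_span_range_iff_exists_fun K).mp this
    exact ⟨c, hc.symm⟩
  rw [p.as_sum]
  refine Submodule.sum_mem _ fun v hv => ?_
  have hv : v 0 + v 1 = n := by
    simpa [Finsupp.weight_apply, Finsupp.sum_fintype, Fin.sum_univ_two] using
      hp (mem_support_iff.mp hv)
  rw [← mul_one (coeff v p), ← smul_eq_mul, ← smul_monomial, monomial_one_fin_two]
  refine Submodule.smul_mem _ _ (Submodule.subset_span ⟨⟨v 0, by omega⟩, ?_⟩)
  simp only [show n - v 0 = v 1 by omega]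

lemma IsHomogeneous.exists_eq_linear {p : MvPolynomial (Fin 2) K} (hp : p.IsHomogeneous 1) :
    ∃ a b : K, p = a • X 0 + b • X 1 := by
  obtain ⟨c, rfl⟩ := hp.exists_eq_sum_X_pow_mul_X_pow
  exact ⟨c 1, c 0, by simp [Fin.sum_univ_succ, add_comm]⟩

lemma IsHomogeneous.exists_eq_quadratic {p : MvPolynomial (Fin 2) K} (hp : p.IsHomogeneous 2) :
    ∃ a b c : K, p = a • X 0 ^ 2 + b • (X 0 * X 1) + c • X 1 ^ 2 := by
  obtain ⟨c, rfl⟩ := hp.exists_eq_sum_X_pow_mul_X_pow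
  exact ⟨c 2, c 1, c 0, by simp [Fin.sum_univ_succ]; abel⟩

end MvPolynomial


section Piece

variable {K : Type*} [Field K] {n : ℕ} {I : Ideal (MvPolynomial (Fin n) K)}

lemma mk_mem_piece {p : MvPolynomial (Fin n) K} {i : ℕ} (hp : p.IsHomogeneous i) :
    Ideal.Quotient.mkₐ K I p ∈ piece I i :=
  Submodule.mem_map_of_mem ((mem_homogeneousSubmodule i p).mpr hp)

lemma mem_of_piece_eq_bot {p : MvPolynomial (Fin n) K} {i : ℕ} (h : piece I i = ⊥)
    (hp : p.IsHomogeneous i) : p ∈ I := by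
  simpa [h, Ideal.Quotient.eq_zero_iff_mem] using mk_mem_piece (I := I) hp

lemma eq_zero_of_eval_quadrics_eq_zero
    (hquad : ∃ Q : Set (MvPolynomial (Fin n) K), (∀ q ∈ Q, q.IsHomogeneous 2) ∧ I = Ideal.span Q)
    (h3 : piece I 3 = ⊥) {x : Fin n → K} (hx : ∀ q ∈ I, q.IsHomogeneous 2 → eval x q = 0) :
    x = 0 := by
  obtain ⟨Q, hQ, rfl⟩ := hquad
  have hle : Ideal.span Q ≤ RingHom.ker (eval x) :=
    Ideal.span_le.mpr fun q hq => hx q (Ideal.subset_span hq) (hQ q hq)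
  funext j
  simpa using hle (mem_of_piece_eq_bot h3 (isHomogeneous_X_pow j 3))

end Piece

section TwoVariables

variable {K : Type*} [Field K] {I : Ideal (MvPolynomial (Fin 2) K)}

local notation "π" => Ideal.Quotient.mkₐ K I

lemma piece_one_eq_span : piece I 1 = Submodule.span K {π (X 0), π (X 1)} := by
  apply le_antisymm
  · rintro _ ⟨p, hp, rfl⟩
    obtain ⟨a, b, rfl⟩ := ((mem_homogeneousSubmodule 1 p).mp hp).exists_eq_linear
    rw [AlgHom.toLinearMap_apply, map_add, map_smul, map_smul]
    exact Submodule.mem_span_pair.mpr ⟨a, b, rfl⟩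
  · rw [Submodule.span_le]
    rintro _ (rfl | rfl) <;> exact mk_mem_piece (isHomogeneous_X K _)

lemma linearIndependent_mk_X (h1 : Module.finrank K (piece I 1) = 2) :
    LinearIndependent K ![π (X 0), π (X 1)] := by
  rw [linearIndependent_iff_card_eq_finrank_span, Set.finrank, Matrix.range_cons_cons_empty,
    ← piece_one_eq_span, h1]
  rfl

/-- A quadric `a X₀² + b X₀X₁ + c X₁²` in `I` satisfies `aα + bβ + cγ = 0`; when `β² = αγ` this
makes it vanish at `(α, β)` and at `(β, γ)`, so both points are `0`. -/
lemma coeffs_eq_zero_of_discr_eq_zero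
    (hquad : ∃ Q : Set (MvPolynomial (Fin 2) K), (∀ q ∈ Q, q.IsHomogeneous 2) ∧ I = Ideal.span Q)
    (h3 : piece I 3 = ⊥) {g : MvPolynomial (Fin 2) K ⧸ I} (hg : g ≠ 0) {α β γ : K}
    (hα : π (X 0 ^ 2) = α • g) (hβ : π (X 0 * X 1) = β • g) (hγ : π (X 1 ^ 2) = γ • g)
    (hdisc : β ^ 2 = α * γ) : α = 0 ∧ β = 0 ∧ γ = 0 := by
  have hzero : ∀ q ∈ I, q.IsHomogeneous 2 → eval ![α, β] q = 0 ∧ eval ![β, γ] q = 0 := by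
    intro q hqI hq
    obtain ⟨a, b, c, rfl⟩ := hq.exists_eq_quadratic
    have hL : a * α + b * β + c * γ = 0 := by
      have : (a * α + b * β + c * γ) • g = 0 := by
        rw [← Ideal.Quotient.eq_zero_iff_mem.mpr hqI, ← Ideal.Quotient.mkₐ_eq_mk K]
        simp only [map_add, map_smul, hα, hβ, hγ, smul_smul, add_smul]
      exact (smul_eq_zero.mp this).resolve_right hg
    simp only [smul_eval, eval_add, eval_mul, eval_pow, eval_X, Matrix.cons_val_zero,
      Matrix.cons_val_one]
    constructor
    · linear_combination α * hL + c * hdisc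
    · linear_combination γ * hL + a * hdisc
  have h₁ := eq_zero_of_eval_quadrics_eq_zero hquad h3 fun q hqI hq => (hzero q hqI hq).1
  have h₂ := eq_zero_of_eval_quadrics_eq_zero hquad h3 fun q hqI hq => (hzero q hqI hq).2
  exact ⟨congrFun h₁ 0, congrFun h₁ 1, congrFun h₂ 1⟩

end TwoVariables

theorem stmt19 {K : Type*} [Field K] [IsAlgClosed K] (h2 : (2 : K) ≠ 0)
    (I : Ideal (MvPolynomial (Fin 2) K))
    (hquad : ∃ Q : Set (MvPolynomial (Fin 2) K),
      (∀ q ∈ Q, q.IsHomogeneous 2) ∧ I = Ideal.span Q)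
    (hH1 : Module.finrank K (piece I 1) = 2)
    (hH2 : Module.finrank K (piece I 2) = 1)
    (hH3 : ∀ i, 3 ≤ i → piece I i = ⊥) :
    ∃ t ∈ piece I 1, ∃ w ∈ piece I 1,
      LinearIndependent K ![t, w] ∧ t ^ 2 = 0 ∧ w ^ 2 = 0 := by
  obtain ⟨g, hg, hgen⟩ := finrank_eq_one_iff'.mp hH2
  have coeff_of_quadric {p : MvPolynomial (Fin 2) K} (hp : p.IsHomogeneous 2) :
      ∃ c : K, Ideal.Quotient.mkₐ K I p = c • (g : MvPolynomial (Fin 2) K ⧸ I) := by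
    obtain ⟨c, hc⟩ := hgen ⟨_, mk_mem_piece hp⟩
    exact ⟨c, (congrArg Subtype.val hc).symm⟩
  have hX := isHomogeneous_X K (0 : Fin 2)
  have hY := isHomogeneous_X K (1 : Fin 2)
  obtain ⟨α, hα⟩ := coeff_of_quadric (hX.pow 2)
  obtain ⟨β, hβ⟩ := coeff_of_quadric (hX.mul hY)
  obtain ⟨γ, hγ⟩ := coeff_of_quadric (hY.pow 2)
  obtain ⟨a, b, c, d, hdet, hab, hcd⟩ := exists_independent_zeros_of_binary_quadratic h2
    (coeffs_eq_zero_of_discr_eq_zero hquad (hH3 3 le_rfl) (by simpa using hg) hα hβ hγ)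
  rw [map_pow] at hα hγ
  rw [map_mul] at hβ
  have hmem (a b : K) :
      a • Ideal.Quotient.mkₐ K I (X 0) + b • Ideal.Quotient.mkₐ K I (X 1) ∈ piece I 1 :=
    piece_one_eq_span (I := I) ▸ Submodule.mem_span_pair.mpr ⟨a, b, rfl⟩
  refine ⟨_, hmem a b, _, hmem c d, (linearIndependent_mk_X hH1).pair_smul_add_smul hdet, ?_, ?_⟩
  · rw [sq_smul_add_smul hα hβ hγ, hab, zero_smul]
  · rw [sq_smul_add_smul hα hβ hγ, hcd, zero_smul]
end
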